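/- Suppose F ∈ C²(ℝ) is bounded from below, and there exist C₃ > 0, C₄ ≥ 0 and r ∈ (1,2] such that |F'(s)|^r ≤ C₃|F(s)| + C₄ for all s ∈ ℝ. Then F has polynomial growth of order r' = r/(r-1): there exist constants C₅, C₆ ≥ 0 such that |F(s)| ≤ C₅|s|^{r'} + C₆ for all s ∈ ℝ. -/

import Mathlib

/-!
Shifting `F` by a lower bound gives `G = F - m + 1 ≥ 1` with `|G'|^r ≤ A G`. For `p = 1 - 1/r = 1/r'`
the derivative `p G^(p-1) G'` of `G^p` is bounded, because `|G'| ≤ A^(1/r) G^(1/r)` and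
`1/r + (p - 1) = 0`. Hence `G^p` grows at most linearly, and `G = (G^p)^r'` at most like `|s|^r'`.
-/

theorem Real.rpow_add_le_mul_rpow_add_rpow {a b p : ℝ} (ha : 0 ≤ a) (hb : 0 ≤ b) (hp : 1 ≤ p) :
    (a + b) ^ p ≤ 2 ^ (p - 1) * (a ^ p + b ^ p) := by
  exact_mod_cast NNReal.rpow_add_le_mul_rpow_add_rpow ⟨a, ha⟩ ⟨b, hb⟩ hp

theorem abs_rpow_sub_rpow_le_of_abs_deriv_le {G G' : ℝ → ℝ} {p B : ℝ}
    (hG : ∀ s, HasDerivAt G (G' s) s) (hpos : ∀ s, 0 < G s) (hp : 0 ≤ p)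
    (hbound : ∀ s, |G' s| ≤ B * G s ^ (1 - p)) (s t : ℝ) :
    |G s ^ p - G t ^ p| ≤ p * B * |s - t| := by
  have hderiv : ∀ x, HasDerivAt (fun y => G y ^ p) (G' x * p * G x ^ (p - 1)) x :=
    fun x => (hG x).rpow_const (Or.inl (hpos x).ne')
  have hderiv_le : ∀ x, |G' x * p * G x ^ (p - 1)| ≤ p * B := fun x => by
    have hGp : 0 < G x ^ (p - 1) := Real.rpow_pos_of_pos (hpos x) _
    calc |G' x * p * G x ^ (p - 1)| = |G' x| * p * G x ^ (p - 1) := by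
          rw [abs_mul, abs_mul, abs_of_nonneg hp, abs_of_pos hGp]
      _ ≤ B * G x ^ (1 - p) * p * G x ^ (p - 1) := by gcongr; exact hbound x
      _ = p * B * G x ^ ((1 - p) + (p - 1)) := by rw [Real.rpow_add (hpos x)]; ring
      _ = p * B := by simp
  simpa using convex_univ.norm_image_sub_le_of_norm_hasDerivWithin_le
    (fun x _ => (hderiv x).hasDerivWithinAt) (fun x _ => hderiv_le x) (Set.mem_univ t)
    (Set.mem_univ s)

theorem exists_le_mul_abs_rpow_add_of_abs_deriv_rpow_le {G G' : ℝ → ℝ} {r A : ℝ}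
    (hG : ∀ s, HasDerivAt G (G' s) s) (hpos : ∀ s, 0 < G s) (hr : 1 < r)
    (hG' : ∀ s, |G' s| ^ r ≤ A * G s) :
    ∃ C D : ℝ, 0 ≤ C ∧ 0 ≤ D ∧ ∀ s, G s ≤ C * |s| ^ (r / (r - 1)) + D := by
  have hr0 : 0 < r := by linarith
  have hA : 0 ≤ A :=
    nonneg_of_mul_nonneg_left ((Real.rpow_nonneg (abs_nonneg _) r).trans (hG' 0)) (hpos 0)
  set p := 1 - r⁻¹
  set q := r / (r - 1)
  set K := p * A ^ r⁻¹
  have hp : 0 < p := sub_pos.2 (inv_lt_one_of_one_lt₀ hr)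
  have hq : q = p⁻¹ := by rw [show p = (r - 1) / r by simp only [p]; field_simp, inv_div]
  have hq1 : 1 ≤ q := by rw [hq]; exact (one_le_inv₀ hp).2 (by simp [p]; positivity)
  have hpq {x : ℝ} (hx : 0 ≤ x) : (x ^ p) ^ q = x := by rw [hq, Real.rpow_rpow_inv hx hp.ne']
  have hbound : ∀ s, |G' s| ≤ A ^ r⁻¹ * G s ^ (1 - p) := fun s => by
    rw [sub_sub_cancel, ← Real.mul_rpow hA (hpos s).le,
      Real.le_rpow_inv_iff_of_pos (abs_nonneg _) (by positivity [hpos s]) hr0]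
    exact hG' s
  have hlip (s : ℝ) : G s ^ p ≤ G 0 ^ p + K * |s| := by
    have := abs_rpow_sub_rpow_le_of_abs_deriv_le hG hpos hp.le hbound s 0
    rw [sub_zero] at this
    linarith [(abs_le.1 this).2]
  have hG0 := (hpos 0).le
  refine ⟨2 ^ (q - 1) * K ^ q, 2 ^ (q - 1) * G 0, by positivity, by positivity, fun s => ?_⟩
  calc G s = (G s ^ p) ^ q := (hpq (hpos s).le).symm
    _ ≤ (G 0 ^ p + K * |s|) ^ q :=
        Real.rpow_le_rpow (Real.rpow_nonneg (hpos s).le _) (hlip s) (by linarith)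
    _ ≤ 2 ^ (q - 1) * ((G 0 ^ p) ^ q + (K * |s|) ^ q) :=
        Real.rpow_add_le_mul_rpow_add_rpow (Real.rpow_nonneg hG0 _) (by positivity) hq1
    _ = 2 ^ (q - 1) * K ^ q * |s| ^ q + 2 ^ (q - 1) * G 0 := by
        rw [hpq hG0, Real.mul_rpow (by positivity) (abs_nonneg s)]; ring

theorem stmt5_general (F : ℝ → ℝ) (hF : ContDiff ℝ 2 F) (hbdd : BddBelow (Set.range F))
    (C₃ C₄ r : ℝ) (hr : r ∈ Set.Ioc (1 : ℝ) 2)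
    (hgrowth : ∀ s : ℝ, |deriv F s| ^ r ≤ C₃ * |F s| + C₄) :
    ∃ C₅ C₆ : ℝ, 0 ≤ C₅ ∧ 0 ≤ C₆ ∧ ∀ s : ℝ, |F s| ≤ C₅ * |s| ^ (r / (r - 1)) + C₆ := by
  obtain ⟨m, hm⟩ := hbdd
  have hmF (s : ℝ) : m ≤ F s := hm (Set.mem_range_self s)
  set G := fun s => F s - m + 1
  have hG (s : ℝ) : HasDerivAt G (deriv F s) s :=
    (((hF.differentiable (by norm_num)) s).hasDerivAt.sub_const m).add_const 1
  have hFG (s : ℝ) : |F s| ≤ G s + |m| := by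
    refine abs_le.2 ⟨?_, ?_⟩ <;> simp only [G] <;> linarith [hmF s, neg_abs_le m, le_abs_self m]
  have hG1 (s : ℝ) : 1 ≤ G s := by simp only [G]; linarith [hmF s]
  have hG' (s : ℝ) : |deriv F s| ^ r ≤ (|C₃| * (1 + |m|) + |C₄|) * G s :=
    calc |deriv F s| ^ r ≤ C₃ * |F s| + C₄ := hgrowth s
      _ ≤ |C₃| * (G s + |m|) + |C₄| :=
          add_le_add (mul_le_mul (le_abs_self _) (hFG s) (abs_nonneg _) (abs_nonneg _))
            (le_abs_self _)
      _ ≤ (|C₃| * (1 + |m|) + |C₄|) * G s := by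
          nlinarith [hG1 s, abs_nonneg C₄, mul_nonneg (abs_nonneg C₃) (abs_nonneg m)]
  obtain ⟨C, D, hC, hD, hGle⟩ :=
    exists_le_mul_abs_rpow_add_of_abs_deriv_rpow_le hG (fun s => one_pos.trans_le (hG1 s)) hr.1
      hG'
  exact ⟨C, D + |m|, hC, add_nonneg hD (abs_nonneg m), fun s => by linarith [hFG s, hGle s]⟩

/-- If `F ∈ C²(ℝ)` is bounded below and `|F'(s)|^r ≤ C₃|F(s)| + C₄` for some
`C₃ > 0`, `C₄ ≥ 0`, `r ∈ (1,2]`, then `F` has polynomial growth of order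
`r' = r/(r-1)`: there exist `C₅, C₆ ≥ 0` with `|F(s)| ≤ C₅|s|^{r'} + C₆`. -/
theorem stmt5 (F : ℝ → ℝ) (hF : ContDiff ℝ 2 F) (hbdd : BddBelow (Set.range F))
    (C₃ C₄ r : ℝ) (hC₃ : 0 < C₃) (hC₄ : 0 ≤ C₄) (hr : r ∈ Set.Ioc (1 : ℝ) 2)
    (hgrowth : ∀ s : ℝ, |deriv F s| ^ r ≤ C₃ * |F s| + C₄) :
    ∃ C₅ C₆ : ℝ, 0 ≤ C₅ ∧ 0 ≤ C₆ ∧ ∀ s : ℝ, |F s| ≤ C₅ * |s| ^ (r / (r - 1)) + C₆ :=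
  stmt5_general F hF hbdd C₃ C₄ r hr hgrowth
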